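/- arXiv:1409.1164 — 2 statements merged into one kernel-verified Lean document; each statement's English description precedes it below -/
import Mathlib

section
/- The energy-momentum tensor of an electromagnetic field satisfies the dominant energy condition: for an antisymmetric tensor F_{ab} on Minkowski space, with T_{ab} = F_{am}F_b{}^m − (1/4)η_{ab}F_{mn}F^{mn} (sign conventions so that T(ξ,ξ) ≥ 0 for timelike ξ), the vector T^a{}_b ξ^b is causal and co-oriented with ξ for every timelike ξ. -/
open Matrix

set_option maxHeartbeats 2000000

/-- The Minkowski metric matrix, diag(1,-1,-1,-1). -/
def ηm : Matrix (Fin 4) (Fin 4) ℝ := Matrix.diagonal ![1, -1, -1, -1]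

/-- The Minkowski inner product of two vectors. -/
def qη (u v : Fin 4 → ℝ) : ℝ := ∑ i, ∑ j, ηm i j * u i * v j

private theorem dec_hη : (ηm : Matrix (Fin 4) (Fin 4) ℝ)
    = !![1,0,0,0;0,-1,0,0;0,0,-1,0;0,0,0,-1] := by
  ext i j; fin_cases i <;> fin_cases j <;>
    simp [ηm, Matrix.diagonal, Matrix.vecHead, Matrix.vecTail]

/-- A vector Minkowski-orthogonal to a timelike vector is spacelike or zero. -/
private theorem dec_spacelike (ξ w : Fin 4 → ℝ) (hξ : 0 < qη ξ ξ) (h : qη ξ w = 0) :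
    qη w w ≤ 0 := by
  simp [qη, ηm, Fin.sum_univ_four, Matrix.diagonal] at *
  have h0 : ξ 0 * w 0 = ξ 1 * w 1 + ξ 2 * w 2 + ξ 3 * w 3 := by linarith
  have h2 : (ξ 0 * w 0) * (ξ 0 * w 0) = (ξ 1 * w 1 + ξ 2 * w 2 + ξ 3 * w 3) *
      (ξ 1 * w 1 + ξ 2 * w 2 + ξ 3 * w 3) := by rw [h0]
  nlinarith [h2, sq_nonneg (ξ 1 * w 2 - ξ 2 * w 1), sq_nonneg (ξ 1 * w 3 - ξ 3 * w 1),
    sq_nonneg (ξ 2 * w 3 - ξ 3 * w 2), sq_nonneg (w 1), sq_nonneg (w 2), sq_nonneg (w 3),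
    sq_nonneg (ξ 1), sq_nonneg (ξ 2), sq_nonneg (ξ 3), hξ]

private theorem dec_key1 (a b c d e f : ℝ) (ξ : Fin 4 → ℝ) :
    qη ![(1/2)*f*f*ξ 0 + (1/2)*e*e*ξ 0 + (1/2)*d*d*ξ 0 - c*e*ξ 1 + c*d*ξ 2 + (1/2)*c*c*ξ 0 + b*f*ξ 1 - b*d*ξ 3 + (1/2)*b*b*ξ 0 - a*f*ξ 2 + a*e*ξ 3 + (1/2)*a*a*ξ 0,
        (-1/2)*f*f*ξ 1 + (-1/2)*e*e*ξ 1 + d*f*ξ 3 + d*e*ξ 2 + (1/2)*d*d*ξ 1 + c*e*ξ 0 + (-1/2)*c*c*ξ 1 - b*f*ξ 0 + (-1/2)*b*b*ξ 1 + a*c*ξ 3 + a*b*ξ 2 + (1/2)*a*a*ξ 1,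
        (-1/2)*f*f*ξ 2 + e*f*ξ 3 + (1/2)*e*e*ξ 2 + d*e*ξ 1 + (-1/2)*d*d*ξ 2 - c*d*ξ 0 + (-1/2)*c*c*ξ 2 + b*c*ξ 3 + (1/2)*b*b*ξ 2 + a*f*ξ 0 + a*b*ξ 1 + (-1/2)*a*a*ξ 2,
        (1/2)*f*f*ξ 3 + e*f*ξ 2 + (-1/2)*e*e*ξ 3 + d*f*ξ 1 + (-1/2)*d*d*ξ 3 + (1/2)*c*c*ξ 3 + b*d*ξ 0 + b*c*ξ 2 + (-1/2)*b*b*ξ 3 - a*e*ξ 0 + a*c*ξ 1 + (-1/2)*a*a*ξ 3]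
      ![(1/2)*f*f*ξ 0 + (1/2)*e*e*ξ 0 + (1/2)*d*d*ξ 0 - c*e*ξ 1 + c*d*ξ 2 + (1/2)*c*c*ξ 0 + b*f*ξ 1 - b*d*ξ 3 + (1/2)*b*b*ξ 0 - a*f*ξ 2 + a*e*ξ 3 + (1/2)*a*a*ξ 0,
        (-1/2)*f*f*ξ 1 + (-1/2)*e*e*ξ 1 + d*f*ξ 3 + d*e*ξ 2 + (1/2)*d*d*ξ 1 + c*e*ξ 0 + (-1/2)*c*c*ξ 1 - b*f*ξ 0 + (-1/2)*b*b*ξ 1 + a*c*ξ 3 + a*b*ξ 2 + (1/2)*a*a*ξ 1,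
        (-1/2)*f*f*ξ 2 + e*f*ξ 3 + (1/2)*e*e*ξ 2 + d*e*ξ 1 + (-1/2)*d*d*ξ 2 - c*d*ξ 0 + (-1/2)*c*c*ξ 2 + b*c*ξ 3 + (1/2)*b*b*ξ 2 + a*f*ξ 0 + a*b*ξ 1 + (-1/2)*a*a*ξ 2,
        (1/2)*f*f*ξ 3 + e*f*ξ 2 + (-1/2)*e*e*ξ 3 + d*f*ξ 1 + (-1/2)*d*d*ξ 3 + (1/2)*c*c*ξ 3 + b*d*ξ 0 + b*c*ξ 2 + (-1/2)*b*b*ξ 3 - a*e*ξ 0 + a*c*ξ 1 + (-1/2)*a*a*ξ 3]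
    = (((d^2+e^2+f^2-a^2-b^2-c^2)/2)^2 + (a*d+b*e+c*f)^2) * qη ξ ξ := by
  simp [qη, ηm, Fin.sum_univ_four, Matrix.diagonal, Matrix.vecHead, Matrix.vecTail]
  ring

private theorem dec_key2 (a b c d e f : ℝ) (ξ : Fin 4 → ℝ) (hξ : 0 < qη ξ ξ) :
    0 ≤ qη ![(1/2)*f*f*ξ 0 + (1/2)*e*e*ξ 0 + (1/2)*d*d*ξ 0 - c*e*ξ 1 + c*d*ξ 2 + (1/2)*c*c*ξ 0 + b*f*ξ 1 - b*d*ξ 3 + (1/2)*b*b*ξ 0 - a*f*ξ 2 + a*e*ξ 3 + (1/2)*a*a*ξ 0,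
        (-1/2)*f*f*ξ 1 + (-1/2)*e*e*ξ 1 + d*f*ξ 3 + d*e*ξ 2 + (1/2)*d*d*ξ 1 + c*e*ξ 0 + (-1/2)*c*c*ξ 1 - b*f*ξ 0 + (-1/2)*b*b*ξ 1 + a*c*ξ 3 + a*b*ξ 2 + (1/2)*a*a*ξ 1,
        (-1/2)*f*f*ξ 2 + e*f*ξ 3 + (1/2)*e*e*ξ 2 + d*e*ξ 1 + (-1/2)*d*d*ξ 2 - c*d*ξ 0 + (-1/2)*c*c*ξ 2 + b*c*ξ 3 + (1/2)*b*b*ξ 2 + a*f*ξ 0 + a*b*ξ 1 + (-1/2)*a*a*ξ 2,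
        (1/2)*f*f*ξ 3 + e*f*ξ 2 + (-1/2)*e*e*ξ 3 + d*f*ξ 1 + (-1/2)*d*d*ξ 3 + (1/2)*c*c*ξ 3 + b*d*ξ 0 + b*c*ξ 2 + (-1/2)*b*b*ξ 3 - a*e*ξ 0 + a*c*ξ 1 + (-1/2)*a*a*ξ 3]
      ξ := by
  have hE : qη ξ ![a*ξ 1+b*ξ 2+c*ξ 3, a*ξ 0-f*ξ 2+e*ξ 3, b*ξ 0+f*ξ 1-d*ξ 3,
      c*ξ 0-e*ξ 1+d*ξ 2] = 0 := by
    simp [qη, ηm, Fin.sum_univ_four, Matrix.diagonal, Matrix.vecHead, Matrix.vecTail]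
    ring
  have hB : qη ξ ![d*ξ 1+e*ξ 2+f*ξ 3, d*ξ 0+c*ξ 2-b*ξ 3, e*ξ 0-c*ξ 1+a*ξ 3,
      f*ξ 0+b*ξ 1-a*ξ 2] = 0 := by
    simp [qη, ηm, Fin.sum_univ_four, Matrix.diagonal, Matrix.vecHead, Matrix.vecTail]
    ring
  have sE := dec_spacelike ξ _ hξ hE
  have sB := dec_spacelike ξ _ hξ hB
  have key : qη ![(1/2)*f*f*ξ 0 + (1/2)*e*e*ξ 0 + (1/2)*d*d*ξ 0 - c*e*ξ 1 + c*d*ξ 2 + (1/2)*c*c*ξ 0 + b*f*ξ 1 - b*d*ξ 3 + (1/2)*b*b*ξ 0 - a*f*ξ 2 + a*e*ξ 3 + (1/2)*a*a*ξ 0,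
        (-1/2)*f*f*ξ 1 + (-1/2)*e*e*ξ 1 + d*f*ξ 3 + d*e*ξ 2 + (1/2)*d*d*ξ 1 + c*e*ξ 0 + (-1/2)*c*c*ξ 1 - b*f*ξ 0 + (-1/2)*b*b*ξ 1 + a*c*ξ 3 + a*b*ξ 2 + (1/2)*a*a*ξ 1,
        (-1/2)*f*f*ξ 2 + e*f*ξ 3 + (1/2)*e*e*ξ 2 + d*e*ξ 1 + (-1/2)*d*d*ξ 2 - c*d*ξ 0 + (-1/2)*c*c*ξ 2 + b*c*ξ 3 + (1/2)*b*b*ξ 2 + a*f*ξ 0 + a*b*ξ 1 + (-1/2)*a*a*ξ 2,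
        (1/2)*f*f*ξ 3 + e*f*ξ 2 + (-1/2)*e*e*ξ 3 + d*f*ξ 1 + (-1/2)*d*d*ξ 3 + (1/2)*c*c*ξ 3 + b*d*ξ 0 + b*c*ξ 2 + (-1/2)*b*b*ξ 3 - a*e*ξ 0 + a*c*ξ 1 + (-1/2)*a*a*ξ 3]
      ξ
    = -(qη ![a*ξ 1+b*ξ 2+c*ξ 3, a*ξ 0-f*ξ 2+e*ξ 3, b*ξ 0+f*ξ 1-d*ξ 3, c*ξ 0-e*ξ 1+d*ξ 2]
           ![a*ξ 1+b*ξ 2+c*ξ 3, a*ξ 0-f*ξ 2+e*ξ 3, b*ξ 0+f*ξ 1-d*ξ 3, c*ξ 0-e*ξ 1+d*ξ 2]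
        + qη ![d*ξ 1+e*ξ 2+f*ξ 3, d*ξ 0+c*ξ 2-b*ξ 3, e*ξ 0-c*ξ 1+a*ξ 3, f*ξ 0+b*ξ 1-a*ξ 2]
             ![d*ξ 1+e*ξ 2+f*ξ 3, d*ξ 0+c*ξ 2-b*ξ 3, e*ξ 0-c*ξ 1+a*ξ 3, f*ξ 0+b*ξ 1-a*ξ 2])/2 := by
    simp [qη, ηm, Fin.sum_univ_four, Matrix.diagonal, Matrix.vecHead, Matrix.vecTail]
    ring
  rw [key]
  linarith

private theorem dec_hv (a b c d e f : ℝ) (ξ : Fin 4 → ℝ) :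
    (ηm * (((1/4) * Matrix.trace ((!![0,a,b,c; -a,0,f,-e; -b,-f,0,d; -c,e,-d,0] : Matrix (Fin 4) (Fin 4) ℝ) * ηm * (!![0,a,b,c; -a,0,f,-e; -b,-f,0,d; -c,e,-d,0] : Matrix (Fin 4) (Fin 4) ℝ).transpose * ηm)) • ηm
      - (!![0,a,b,c; -a,0,f,-e; -b,-f,0,d; -c,e,-d,0] : Matrix (Fin 4) (Fin 4) ℝ) * ηm * (!![0,a,b,c; -a,0,f,-e; -b,-f,0,d; -c,e,-d,0] : Matrix (Fin 4) (Fin 4) ℝ).transpose)).mulVec ξ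
    = ![(1/2)*f*f*ξ 0 + (1/2)*e*e*ξ 0 + (1/2)*d*d*ξ 0 - c*e*ξ 1 + c*d*ξ 2 + (1/2)*c*c*ξ 0 + b*f*ξ 1 - b*d*ξ 3 + (1/2)*b*b*ξ 0 - a*f*ξ 2 + a*e*ξ 3 + (1/2)*a*a*ξ 0,
        (-1/2)*f*f*ξ 1 + (-1/2)*e*e*ξ 1 + d*f*ξ 3 + d*e*ξ 2 + (1/2)*d*d*ξ 1 + c*e*ξ 0 + (-1/2)*c*c*ξ 1 - b*f*ξ 0 + (-1/2)*b*b*ξ 1 + a*c*ξ 3 + a*b*ξ 2 + (1/2)*a*a*ξ 1,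
        (-1/2)*f*f*ξ 2 + e*f*ξ 3 + (1/2)*e*e*ξ 2 + d*e*ξ 1 + (-1/2)*d*d*ξ 2 - c*d*ξ 0 + (-1/2)*c*c*ξ 2 + b*c*ξ 3 + (1/2)*b*b*ξ 2 + a*f*ξ 0 + a*b*ξ 1 + (-1/2)*a*a*ξ 2,
        (1/2)*f*f*ξ 3 + e*f*ξ 2 + (-1/2)*e*e*ξ 3 + d*f*ξ 1 + (-1/2)*d*d*ξ 3 + (1/2)*c*c*ξ 3 + b*d*ξ 0 + b*c*ξ 2 + (-1/2)*b*b*ξ 3 - a*e*ξ 0 + a*c*ξ 1 + (-1/2)*a*a*ξ 3] := by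
  funext i
  rw [dec_hη]
  fin_cases i <;>
  · simp [Matrix.mulVec, Matrix.vecMul, dotProduct, Matrix.mul_apply, Matrix.trace, Matrix.diag,
      Fin.sum_univ_four, Matrix.smul_apply, Matrix.sub_apply, Matrix.transpose_apply,
      Matrix.vecHead, Matrix.vecTail]
    ring

/-- The energy-momentum tensor of an electromagnetic field satisfies the dominant
energy condition: for every future-directed timelike ξ, the vector T^a{}_b ξ^b is
causal and co-oriented with ξ. -/
theorem em_energy_momentum_dec (F : Matrix (Fin 4) (Fin 4) ℝ)
    (hF : ∀ i j, F i j = - F j i)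
    (ξ : Fin 4 → ℝ) (hξ : 0 < qη ξ ξ) (hfut : 0 < ξ 0) :
    -- T_{ab} = F_{am}F^m{}_b + (1/4)η_{ab}F_{mn}F^{mn}  (signs fixed so T(ξ,ξ) ≥ 0)
    let T : Matrix (Fin 4) (Fin 4) ℝ :=
      ((1/4) * Matrix.trace (F * ηm * F.transpose * ηm)) • ηm - F * ηm * F.transpose
    -- the vector T^a{}_b ξ^b
    let v : Fin 4 → ℝ := (ηm * T).mulVec ξ
    0 ≤ qη v v ∧ 0 ≤ qη v ξ := by
  have hFe : F = !![0, F 0 1, F 0 2, F 0 3; -(F 0 1), 0, F 1 2, -(F 3 1);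
      -(F 0 2), -(F 1 2), 0, F 2 3; -(F 0 3), F 3 1, -(F 2 3), 0] := by
    ext i j
    fin_cases i <;> fin_cases j <;>
      simp [Matrix.vecHead, Matrix.vecTail] <;>
      first
        | rfl
        | exact hF _ _
        | (have := hF 0 0; linarith)
        | (have := hF 1 1; linarith)
        | (have := hF 2 2; linarith)
        | (have := hF 3 3; linarith)
  intro T v
  have hv : v = ![(1/2)*(F 1 2)*(F 1 2)*ξ 0 + (1/2)*(F 3 1)*(F 3 1)*ξ 0 + (1/2)*(F 2 3)*(F 2 3)*ξ 0 - (F 0 3)*(F 3 1)*ξ 1 + (F 0 3)*(F 2 3)*ξ 2 + (1/2)*(F 0 3)*(F 0 3)*ξ 0 + (F 0 2)*(F 1 2)*ξ 1 - (F 0 2)*(F 2 3)*ξ 3 + (1/2)*(F 0 2)*(F 0 2)*ξ 0 - (F 0 1)*(F 1 2)*ξ 2 + (F 0 1)*(F 3 1)*ξ 3 + (1/2)*(F 0 1)*(F 0 1)*ξ 0,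
        (-1/2)*(F 1 2)*(F 1 2)*ξ 1 + (-1/2)*(F 3 1)*(F 3 1)*ξ 1 + (F 2 3)*(F 1 2)*ξ 3 + (F 2 3)*(F 3 1)*ξ 2 + (1/2)*(F 2 3)*(F 2 3)*ξ 1 + (F 0 3)*(F 3 1)*ξ 0 + (-1/2)*(F 0 3)*(F 0 3)*ξ 1 - (F 0 2)*(F 1 2)*ξ 0 + (-1/2)*(F 0 2)*(F 0 2)*ξ 1 + (F 0 1)*(F 0 3)*ξ 3 + (F 0 1)*(F 0 2)*ξ 2 + (1/2)*(F 0 1)*(F 0 1)*ξ 1,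
        (-1/2)*(F 1 2)*(F 1 2)*ξ 2 + (F 3 1)*(F 1 2)*ξ 3 + (1/2)*(F 3 1)*(F 3 1)*ξ 2 + (F 2 3)*(F 3 1)*ξ 1 + (-1/2)*(F 2 3)*(F 2 3)*ξ 2 - (F 0 3)*(F 2 3)*ξ 0 + (-1/2)*(F 0 3)*(F 0 3)*ξ 2 + (F 0 2)*(F 0 3)*ξ 3 + (1/2)*(F 0 2)*(F 0 2)*ξ 2 + (F 0 1)*(F 1 2)*ξ 0 + (F 0 1)*(F 0 2)*ξ 1 + (-1/2)*(F 0 1)*(F 0 1)*ξ 2,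
        (1/2)*(F 1 2)*(F 1 2)*ξ 3 + (F 3 1)*(F 1 2)*ξ 2 + (-1/2)*(F 3 1)*(F 3 1)*ξ 3 + (F 2 3)*(F 1 2)*ξ 1 + (-1/2)*(F 2 3)*(F 2 3)*ξ 3 + (1/2)*(F 0 3)*(F 0 3)*ξ 3 + (F 0 2)*(F 2 3)*ξ 0 + (F 0 2)*(F 0 3)*ξ 2 + (-1/2)*(F 0 2)*(F 0 2)*ξ 3 - (F 0 1)*(F 3 1)*ξ 0 + (F 0 1)*(F 0 3)*ξ 1 + (-1/2)*(F 0 1)*(F 0 1)*ξ 3] := by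
    show (ηm * T).mulVec ξ = _
    show (ηm * (((1/4) * Matrix.trace (F * ηm * F.transpose * ηm)) • ηm
      - F * ηm * F.transpose)).mulVec ξ = _
    rw [hFe]
    exact dec_hv (F 0 1) (F 0 2) (F 0 3) (F 2 3) (F 3 1) (F 1 2) ξ
  constructor
  · rw [hv, dec_key1 (F 0 1) (F 0 2) (F 0 3) (F 2 3) (F 3 1) (F 1 2) ξ]
    exact mul_nonneg (by positivity) hξ.le
  · rw [hv]
    exact dec_key2 (F 0 1) (F 0 2) (F 0 3) (F 2 3) (F 3 1) (F 1 2) ξ hξ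
end

section
/- Cone widening for n < 1: if 0 < n < 1, then there exists a vector ζ with η̃(ζ,ζ) > 0 (timelike for the Gordon metric) but η(ζ,ζ) < 0 (spacelike for the Minkowski metric). Hence the η̃-causal cone strictly contains the η-causal cone. -/
/-- The Minkowski inner product on ℝ⁴, signature (+,-,-,-). -/
def η (u v : Fin 4 → ℝ) : ℝ := u 0 * v 0 - u 1 * v 1 - u 2 * v 2 - u 3 * v 3

/-- Gordon metric applied to a pair of vectors. -/
noncomputable def gordon (ξ : Fin 4 → ℝ) (n : ℝ) (u v : Fin 4 → ℝ) : ℝ :=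
  η u v + ((1 - n^2)/n^2) * (η ξ u) * (η ξ v)

/-!
The Gordon quadratic form is `η(ζ,ζ) + c η(ξ,ζ)²` with `c = (1 - n²)/n² > 0`, so it dominates `η`.
For the strict widening, move off the timelike `ξ` along an `η`-orthogonal spacelike `v`:
`ζ = ξ + t v` keeps `η(ξ,ζ) = η(ξ,ξ) = m` and has `η(ζ,ζ) = m + t² η(v,v)`. Choosing
`t² η(v,v) = -(m + c m²/2)` makes `ζ` spacelike for `η` while the extra term `c m²` keeps it
timelike for the Gordon metric.
-/

theorem η_comm (u v : Fin 4 → ℝ) : η u v = η v u := by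
  simp only [η]; ring

theorem η_add_smul_right (u v w : Fin 4 → ℝ) (t : ℝ) :
    η u (v + t • w) = η u v + t * η u w := by
  simp only [η, Pi.add_apply, Pi.smul_apply, smul_eq_mul]; ring

theorem η_add_smul_self_of_orthogonal {u v : Fin 4 → ℝ} (huv : η u v = 0) (t : ℝ) :
    η (u + t • v) (u + t • v) = η u u + t ^ 2 * η v v := by
  have hvu : η v u = 0 := by rw [η_comm, huv]
  simp only [η, Pi.add_apply, Pi.smul_apply, smul_eq_mul] at huv hvu ⊢
  linear_combination t * huv + t * hvu

theorem exists_η_orthogonal_spacelike {ξ : Fin 4 → ℝ} (hξ : 0 < η ξ ξ) :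
    ∃ v : Fin 4 → ℝ, η ξ v = 0 ∧ η v v < 0 := by
  refine ⟨![ξ 1, ξ 0, 0, 0], ?_, ?_⟩
  · simp only [η, Matrix.cons_val_zero, Matrix.cons_val_one, Matrix.cons_val, mul_zero, sub_zero]
    ring
  · simp only [η] at hξ
    simp only [η, Matrix.cons_val_zero, Matrix.cons_val_one, Matrix.cons_val, mul_zero, sub_zero]
    nlinarith [mul_self_nonneg (ξ 2), mul_self_nonneg (ξ 3)]

theorem exists_sq_mul_eq_neg {w : ℝ} (hw : w < 0) {x : ℝ} (hx : 0 ≤ x) :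
    ∃ t : ℝ, t ^ 2 * w = -x := by
  refine ⟨√(x / -w), ?_⟩
  rw [Real.sq_sqrt (div_nonneg hx (neg_nonneg.2 hw.le))]
  field_simp [hw.ne]

theorem gordon_self (ξ : Fin 4 → ℝ) (n : ℝ) (ζ : Fin 4 → ℝ) :
    gordon ξ n ζ ζ = η ζ ζ + (1 - n ^ 2) / n ^ 2 * η ξ ζ ^ 2 := by
  simp only [gordon]; ring

theorem η_self_le_gordon_self (ξ : Fin 4 → ℝ) {n : ℝ} (hn : n ^ 2 ≤ 1) (ζ : Fin 4 → ℝ) :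
    η ζ ζ ≤ gordon ξ n ζ ζ := by
  rw [gordon_self, le_add_iff_nonneg_right]
  exact mul_nonneg (div_nonneg (sub_nonneg.2 hn) (sq_nonneg n)) (sq_nonneg _)

theorem exists_gordon_timelike_η_spacelike {ξ : Fin 4 → ℝ} (hξ : 0 < η ξ ξ) {n : ℝ}
    (hn0 : n ≠ 0) (hn1 : n ^ 2 < 1) :
    ∃ ζ : Fin 4 → ℝ, 0 < gordon ξ n ζ ζ ∧ η ζ ζ < 0 := by
  set c := (1 - n ^ 2) / n ^ 2
  set m := η ξ ξ
  have hc : 0 < c := div_pos (sub_pos.2 hn1) (by positivity)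
  obtain ⟨v, hξv, hv⟩ := exists_η_orthogonal_spacelike hξ
  obtain ⟨t, ht⟩ := exists_sq_mul_eq_neg hv (x := m + c * m ^ 2 / 2) (by positivity)
  have hself : η (ξ + t • v) (ξ + t • v) = -(c * m ^ 2 / 2) := by
    rw [η_add_smul_self_of_orthogonal hξv, ht]; ring
  have hcross : η ξ (ξ + t • v) = m := by
    rw [η_add_smul_right, hξv, mul_zero, add_zero]
  refine ⟨ξ + t • v, ?_, ?_⟩
  · rw [gordon_self, hself, hcross]
    nlinarith [mul_pos hc (pow_pos hξ 2)]
  · rw [hself]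
    nlinarith [mul_pos hc (pow_pos hξ 2)]

/-- Cone widening for 0 < n < 1: there is a Gordon-timelike vector that is
Minkowski-spacelike, and moreover every Minkowski-causal vector is Gordon-causal,
so the Gordon causal cone strictly contains the Minkowski causal cone. -/
theorem gordon_cone_widening (ξ : Fin 4 → ℝ) (hξ : η ξ ξ = 1)
    (n : ℝ) (hn0 : 0 < n) (hn1 : n < 1) :
    (∃ ζ : Fin 4 → ℝ, 0 < gordon ξ n ζ ζ ∧ η ζ ζ < 0) ∧
    (∀ ζ : Fin 4 → ℝ, 0 ≤ η ζ ζ → 0 ≤ gordon ξ n ζ ζ) := by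
  have hn_sq : n ^ 2 < 1 := by nlinarith
  exact ⟨exists_gordon_timelike_η_spacelike (hξ ▸ one_pos) hn0.ne' hn_sq,
    fun ζ hζ => hζ.trans (η_self_le_gordon_self ξ hn_sq.le ζ)⟩
end
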